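/- Let s be a natural number, let Ω ⊂ ℝ^s be a finite nonempty set with pairwise distinct elements, let M := card Ω, let f_ω ∈ ℝ with f_ω ≠ 0 for every ω ∈ Ω, and define f(x) = Σ_{ω∈Ω} f_ω e^{ω·x} and z_ω := (e^{ω_1}, …, e^{ω_s}). Then a polynomial p in s real variables of total degree at most M satisfies Σ_{|β|≤M} f(α+β) p_β = 0 for every multi-index α with |α| ≤ M if and only if p(z_ω) = 0 for every ω ∈ Ω. -/
import Mathlib


open MvPolynomial

/-- The finite set of multi-indices `β : Fin s → ℕ` with `|β| = β 1 + ⋯ + β s ≤ n`. -/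
def degLE (s n : ℕ) : Finset (Fin s → ℕ) :=
  (Fintype.piFinset fun _ : Fin s => Finset.range (n + 1)).filter fun β => (∑ i, β i) ≤ n

/-- Evaluation of a polynomial of total degree at most `n` as a sum over `degLE s n`. -/
lemma eval_eq_degLE_sum {s n : ℕ} (q : MvPolynomial (Fin s) ℝ) (hq : q.totalDegree ≤ n)
    (x : Fin s → ℝ) :
    eval x q = ∑ β ∈ degLE s n, (∏ i, x i ^ β i) * coeff (Finsupp.equivFunOnFinite.symm β) q := by
  have hsub : q.support ⊆ (degLE s n).image (Finsupp.equivFunOnFinite.symm) := by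
    intro d hd
    simp only [Finset.mem_image]
    refine ⟨Finsupp.equivFunOnFinite d, ?_, by simp⟩
    have hdeg : (∑ i, d i) ≤ n := by
      have h1 : d.sum (fun _ m => m) = ∑ i, d i := Finsupp.sum_fintype _ _ (fun _ => rfl)
      rw [← h1]
      exact le_trans (MvPolynomial.le_totalDegree hd) hq
    simp only [degLE, Finset.mem_filter, Fintype.mem_piFinset, Finset.mem_range,
      Finsupp.equivFunOnFinite_apply]
    constructor
    · intro i
      have : d i ≤ ∑ j, d j := Finset.single_le_sum (fun j _ => Nat.zero_le _) (Finset.mem_univ i)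
      omega
    · exact hdeg
  rw [MvPolynomial.eval_eq']
  rw [Finset.sum_subset hsub (by
    intro d _ hd
    rw [MvPolynomial.notMem_support_iff.mp hd, zero_mul])]
  rw [Finset.sum_image (by intro a _ b _ h; exact Finsupp.equivFunOnFinite.symm.injective h)]
  apply Finset.sum_congr rfl
  intro β _
  rw [mul_comm]
  congr 1

/-- A degree-one factor vanishing at `x` but not at `y`, when `x ≠ y`. -/
noncomputable def sepFactor {s : ℕ} (y x : Fin s → ℝ) : MvPolynomial (Fin s) ℝ :=
  if h : x ≠ y then (fun i => X i - C (x i)) (Classical.choose (Function.ne_iff.mp h)) else 1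

lemma sepFactor_deg {s : ℕ} (y x : Fin s → ℝ) : (sepFactor y x).totalDegree ≤ 1 := by
  unfold sepFactor
  split
  · simp only []
    refine le_trans (le_trans (le_of_eq (by rw [sub_eq_add_neg, ← C_neg])) (totalDegree_add _ _)) ?_
    simp [totalDegree_X]
  · simp

lemma sepFactor_eval_self {s : ℕ} (y x : Fin s → ℝ) (h : x ≠ y) :
    eval x (sepFactor y x) = 0 := by
  unfold sepFactor
  rw [dif_pos h]
  simp

lemma sepFactor_eval_y {s : ℕ} (y x : Fin s → ℝ) (h : x ≠ y) :
    eval y (sepFactor y x) ≠ 0 := by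
  unfold sepFactor
  rw [dif_pos h]
  have := Classical.choose_spec (Function.ne_iff.mp h)
  simp only [map_sub, eval_X, eval_C]
  exact sub_ne_zero_of_ne (Ne.symm this)

/-- A polynomial of total degree at most `T.card` vanishing on `T` but not at `y ∉ T`. -/
lemma sep_poly {s : ℕ} (T : Finset (Fin s → ℝ)) (y : Fin s → ℝ) (hy : y ∉ T) :
    ∃ q : MvPolynomial (Fin s) ℝ, q.totalDegree ≤ T.card ∧ eval y q ≠ 0 ∧
      ∀ x ∈ T, eval x q = 0 := by
  refine ⟨∏ x ∈ T, sepFactor y x, ?_, ?_, ?_⟩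
  · refine le_trans (totalDegree_finset_prod _ _) ?_
    calc ∑ x ∈ T, (sepFactor y x).totalDegree ≤ ∑ _x ∈ T, 1 :=
      Finset.sum_le_sum fun x _ => sepFactor_deg y x
    _ = T.card := by simp
  · rw [map_prod]
    exact Finset.prod_ne_zero_iff.mpr fun x hx => sepFactor_eval_y y x (fun h => hy (h ▸ hx))
  · intro x hx
    rw [map_prod]
    exact Finset.prod_eq_zero hx (sepFactor_eval_self y x (fun h => hy (h ▸ hx)))

/-- Corollary 2: with `M = #Ω`, a polynomial `p ∈ Π_M` satisfies
`Σ_{|β|≤M} f(α+β) p_β = 0` for all `|α| ≤ M` iff `p` vanishes at all points `z_ω`. -/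
theorem prony_kernel_iff_ideal_cardinality (s : ℕ) (Ω : Finset (Fin s → ℝ)) (hΩ : Ω.Nonempty)
    (fc : (Fin s → ℝ) → ℝ) (hfc : ∀ ω ∈ Ω, fc ω ≠ 0)
    (f : (Fin s → ℝ) → ℝ)
    (hf : ∀ x, f x = ∑ ω ∈ Ω, fc ω * Real.exp (∑ i, ω i * x i))
    (z : (Fin s → ℝ) → Fin s → ℝ)
    (hz : ∀ ω i, z ω i = Real.exp (ω i))
    (p : MvPolynomial (Fin s) ℝ) (hp : p.totalDegree ≤ Ω.card) :
    (∀ α : Fin s → ℕ, (∑ i, α i) ≤ Ω.card →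
        ∑ β ∈ degLE s Ω.card,
          f (fun i => (α i : ℝ) + (β i : ℝ)) * coeff (Finsupp.equivFunOnFinite.symm β) p = 0)
      ↔ ∀ ω ∈ Ω, eval (z ω) p = 0 := by
  -- exp of a weighted sum as a power product
  have hA : ∀ (ω : Fin s → ℝ) (α : Fin s → ℕ),
      Real.exp (∑ i, ω i * (α i : ℝ)) = ∏ i, z ω i ^ α i := by
    intro ω α
    rw [Real.exp_sum]
    exact Finset.prod_congr rfl fun i _ => by rw [mul_comm, Real.exp_nat_mul, hz]
  -- the structured form of the Prony sums
  have hS : ∀ α : Fin s → ℕ,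
      (∑ β ∈ degLE s Ω.card,
          f (fun i => (α i : ℝ) + (β i : ℝ)) * coeff (Finsupp.equivFunOnFinite.symm β) p)
        = ∑ ω ∈ Ω, (fc ω * eval (z ω) p) * ∏ i, z ω i ^ α i := by
    intro α
    have hterm : ∀ β ∈ degLE s Ω.card,
        f (fun i => (α i : ℝ) + (β i : ℝ)) * coeff (Finsupp.equivFunOnFinite.symm β) p
          = ∑ ω ∈ Ω, fc ω * ((∏ i, z ω i ^ α i) *
              ((∏ i, z ω i ^ β i) * coeff (Finsupp.equivFunOnFinite.symm β) p)) := by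
      intro β _
      rw [hf, Finset.sum_mul]
      refine Finset.sum_congr rfl fun ω _ => ?_
      have hsplit : (∑ i, ω i * ((α i : ℝ) + (β i : ℝ)))
          = (∑ i, ω i * (α i : ℝ)) + ∑ i, ω i * (β i : ℝ) := by
        rw [← Finset.sum_add_distrib]
        exact Finset.sum_congr rfl fun i _ => mul_add _ _ _
      rw [hsplit, Real.exp_add, hA, hA]
      ring
    rw [Finset.sum_congr rfl hterm, Finset.sum_comm]
    refine Finset.sum_congr rfl fun ω _ => ?_
    simp_rw [← Finset.mul_sum]
    rw [← eval_eq_degLE_sum p hp]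
    ring
  -- injectivity of z
  have hzinj : ∀ ω ω', z ω = z ω' → ω = ω' := by
    intro ω ω' h
    funext i
    have : Real.exp (ω i) = Real.exp (ω' i) := by rw [← hz, ← hz, h]
    exact Real.exp_injective this
  constructor
  · intro h ω₀ hω₀
    obtain ⟨q, hqd, hqy, hqz⟩ := sep_poly ((Ω.erase ω₀).image z) (z ω₀) (by
      intro hmem
      obtain ⟨ω, hωmem, heq⟩ := Finset.mem_image.mp hmem
      exact (Finset.mem_erase.mp hωmem).1 (hzinj ω ω₀ heq))
    have hqd' : q.totalDegree ≤ Ω.card :=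
      le_trans hqd (le_trans Finset.card_image_le
        (le_trans (Finset.card_erase_le) le_rfl))
    have hE : ∑ ω ∈ Ω, (fc ω * eval (z ω) p) * eval (z ω) q = 0 := by
      calc ∑ ω ∈ Ω, (fc ω * eval (z ω) p) * eval (z ω) q
          = ∑ ω ∈ Ω, ∑ β ∈ degLE s Ω.card,
              ((fc ω * eval (z ω) p) * ∏ i, z ω i ^ β i) *
                coeff (Finsupp.equivFunOnFinite.symm β) q := by
            refine Finset.sum_congr rfl fun ω _ => ?_
            rw [eval_eq_degLE_sum q hqd', Finset.mul_sum]
            exact Finset.sum_congr rfl fun β _ => by ring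
        _ = ∑ β ∈ degLE s Ω.card,
              (∑ ω ∈ Ω, (fc ω * eval (z ω) p) * ∏ i, z ω i ^ β i) *
                coeff (Finsupp.equivFunOnFinite.symm β) q := by
            rw [Finset.sum_comm]
            exact Finset.sum_congr rfl fun β _ => by rw [Finset.sum_mul]
        _ = 0 := by
            refine Finset.sum_eq_zero fun β hβ => ?_
            have hβle : (∑ i, β i) ≤ Ω.card := (Finset.mem_filter.mp hβ).2
            rw [← hS β, h β hβle, zero_mul]
    rw [← Finset.add_sum_erase _ _ hω₀] at hE
    have hrest : ∑ ω ∈ Ω.erase ω₀, (fc ω * eval (z ω) p) * eval (z ω) q = 0 := by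
      refine Finset.sum_eq_zero fun ω hω => ?_
      rw [hqz (z ω) (Finset.mem_image_of_mem z hω), mul_zero]
    rw [hrest, add_zero] at hE
    rcases mul_eq_zero.mp hE with h1 | h2
    · rcases mul_eq_zero.mp h1 with h3 | h4
      · exact absurd h3 (hfc ω₀ hω₀)
      · exact h4
    · exact absurd h2 hqy
  · intro h α _
    rw [hS α]
    exact Finset.sum_eq_zero fun ω hω => by rw [h ω hω, mul_zero, zero_mul]
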